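/- The antipode S of the Connes–Moscovici algebra satisfies the first Hopf algebroid antipode axiom μ_H(S ⊗ id)Δ_l = s_r ε_r; explicitly, for all a, b ∈ A and q ∈ Q: Σ S(a ⊗ q₍₁₎ ⊗ 1)·(1 ⊗ q₍₂₎ ⊗ b) = 1 ⊗ 1 ⊗ T(q)·(ba), where the product is taken in H. -/

import Mathlib

open TensorProduct

noncomputable section

/-- `(id ⊗ Δ) ∘ Δ : Q → Q ⊗ (Q ⊗ Q)`, producing the Sweedler legs
`q₍₁₎ ⊗ q₍₂₎ ⊗ q₍₃₎` of the iterated coproduct. -/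
def comul2 (Q : Type*) [Ring Q] [HopfAlgebra ℂ Q] :
    Q →ₗ[ℂ] Q ⊗[ℂ] (Q ⊗[ℂ] Q) :=
  (LinearMap.lTensor Q (Coalgebra.comul (R := ℂ))).comp (Coalgebra.comul (R := ℂ))

/-- The right-hand side `Σ a (q₍₁₎·a') ⊗ q₍₂₎ q' ⊗ (q₍₃₎·b') b` of the
Connes–Moscovici product formula on `H = A ⊗ Q ⊗ A`. -/
def cmMulRHS {Q A : Type*} [Ring Q] [HopfAlgebra ℂ Q] [Ring A] [Algebra ℂ A]
    (act : Q →ₗ[ℂ] A →ₗ[ℂ] A) (a : A) (q : Q) (b : A) (a' : A) (q' : Q) (b' : A) :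
    A ⊗[ℂ] (Q ⊗[ℂ] A) :=
  TensorProduct.map ((LinearMap.mulLeft ℂ a).comp (act.flip a'))
    (TensorProduct.map (LinearMap.mulRight ℂ q')
      ((LinearMap.mulRight ℂ b).comp (act.flip b')))
    (comul2 Q q)

/-- The order-reversing map `A ⊗ (Q ⊗ A) → A ⊗ (Q ⊗ A)`, `x ⊗ y ⊗ z ↦ z ⊗ y ⊗ x`. -/
def cmRev {Q A : Type*} [Ring Q] [HopfAlgebra ℂ Q] [Ring A] [Algebra ℂ A] :
    (A ⊗[ℂ] (Q ⊗[ℂ] A)) →ₗ[ℂ] (A ⊗[ℂ] (Q ⊗[ℂ] A)) :=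
  (TensorProduct.congr (LinearEquiv.refl ℂ A) (TensorProduct.comm ℂ Q A) ≪≫ₗ
    (TensorProduct.assoc ℂ A A Q).symm ≪≫ₗ
    TensorProduct.congr (TensorProduct.comm ℂ A A) (LinearEquiv.refl ℂ Q) ≪≫ₗ
    TensorProduct.assoc ℂ A A Q ≪≫ₗ
    TensorProduct.congr (LinearEquiv.refl ℂ A) (TensorProduct.comm ℂ A Q)).toLinearMap

/-- The value `Σ T(q₍₃₎)·b ⊗ T(q₍₂₎) ⊗ T(q₍₁₎)·a` of the antipode of the
Connes–Moscovici algebra on an elementary tensor `a ⊗ q ⊗ b`. -/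
def cmAntipodeRHS {Q A : Type*} [Ring Q] [HopfAlgebra ℂ Q] [Ring A] [Algebra ℂ A]
    (act : Q →ₗ[ℂ] A →ₗ[ℂ] A) (a : A) (q : Q) (b : A) :
    A ⊗[ℂ] (Q ⊗[ℂ] A) :=
  cmRev
    (TensorProduct.map ((act.flip a).comp (HopfAlgebra.antipode (R := ℂ)))
      (TensorProduct.map (HopfAlgebra.antipode (R := ℂ))
        ((act.flip b).comp (HopfAlgebra.antipode (R := ℂ))))
      (comul2 Q q))

/-- The linear map `Q →ₗ H`, `x ↦ a ⊗ x ⊗ 1`. -/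
def cmLegL {Q A : Type*} [Ring Q] [HopfAlgebra ℂ Q] [Ring A] [Algebra ℂ A] (a : A) :
    Q →ₗ[ℂ] A ⊗[ℂ] (Q ⊗[ℂ] A) :=
  (TensorProduct.mk ℂ A (Q ⊗[ℂ] A) a).comp ((TensorProduct.mk ℂ Q A).flip 1)

/-- The linear map `Q →ₗ H`, `x ↦ 1 ⊗ x ⊗ b`. -/
def cmLegR {Q A : Type*} [Ring Q] [HopfAlgebra ℂ Q] [Ring A] [Algebra ℂ A] (b : A) :
    Q →ₗ[ℂ] A ⊗[ℂ] (Q ⊗[ℂ] A) :=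
  (TensorProduct.mk ℂ A (Q ⊗[ℂ] A) 1).comp ((TensorProduct.mk ℂ Q A).flip b)

/-! For a summand `x ⊗ y` of `Δq`, the defining formulas give
`S(a ⊗ x ⊗ 1)·(1 ⊗ y ⊗ b) = 1 ⊗ Σ T(x₍₂₎)₍₁₎ y ⊗ (T(x₍₂₎)₍₂₎·b)(T(x₍₁₎)·a)`. Read in the algebra
`Q ⊗ Aᵐᵒᵖ`, whose second factor multiplies in reverse order, the sum over `Δq` is the convolution
product `f * g * j` of `f x = 1 ⊗ T(x)·a`, `g x = Σ T(x)₍₁₎ ⊗ T(x)₍₂₎·b` and `j y = y ⊗ 1`. Since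
the antipode reverses the coproduct, `g = k * t` with `k x = 1 ⊗ T(x)·b` and `t x = T(x) ⊗ 1`.
Associativity of convolution then takes care of all coassociativity bookkeeping: `t * j = 1`
because `j` is an algebra map, and `f * k = x ↦ 1 ⊗ T(x)·(ba)`, again because `T` reverses the
coproduct. That `T` reverses the coproduct is itself a convolution argument:
`(T ⊗ T) ∘ flip ∘ Δ` is a left and `Δ ∘ T` a right convolution inverse of `Δ`. -/

open Coalgebra HopfAlgebra WithConv

namespace Coalgebra

variable {R C M N : Type*} [CommSemiring R] [AddCommMonoid C] [Module R C] [Coalgebra R C]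
  [AddCommMonoid M] [Module R M] [AddCommMonoid N] [Module R N]

lemma map_comp_counit_comul_right (f : C →ₗ[R] M) (g : R →ₗ[R] N) (c : C) :
    map f (g ∘ₗ counit) (comul c) = f c ⊗ₜ g 1 := by
  simp [← LinearMap.map_comp_lTensor]

lemma map_comp_counit_comul_left (g : R →ₗ[R] M) (f : C →ₗ[R] N) (c : C) :
    map (g ∘ₗ counit) f (comul c) = g 1 ⊗ₜ f c := by
  simp [← LinearMap.map_comp_rTensor]

lemma lift_comul_eq_convMul {B : Type*} [Semiring B] [Algebra R B]
    {Φ : C →ₗ[R] C →ₗ[R] M} (ψ : B →ₗ[R] M) (f g : C →ₗ[R] B)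
    (h : ∀ x y, Φ x y = ψ (f x * g y)) (c : C) :
    lift Φ (comul c) = ψ ((toConv f * toConv g) c) := by
  rw [(ℛ R c).convMul_apply, ← (ℛ R c).eq]
  simp [map_sum, h]

end Coalgebra

namespace HopfAlgebra

open Algebra.TensorProduct (includeLeft includeRight)

variable {R C B : Type*} [CommSemiring R] [Semiring C] [HopfAlgebra R C] [Semiring B] [Algebra R B]

lemma toConv_comp_antipode_mul_toConv (f : C →ₐ[R] B) :
    toConv (f.toLinearMap ∘ₗ antipode R) * toConv f.toLinearMap = 1 := by
  have h := LinearMap.algHom_comp_convMul_distrib f (toConv (antipode R)) (toConv LinearMap.id)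
  rw [LinearMap.antipode_mul_id] at h
  ext c
  simpa using (congr($h c)).symm

lemma comul_comp_antipode :
    comul ∘ₗ antipode R =
      map (antipode R) (antipode R) ∘ₗ (TensorProduct.comm R C C).toLinearMap ∘ₗ comul := by
  let j₁ : C →ₐ[R] C ⊗[R] C := includeLeft
  let j₂ : C →ₐ[R] C ⊗[R] C := includeRight
  have comul_eq : toConv comul = toConv j₁.toLinearMap * toConv j₂.toLinearMap := by
    ext c
    rw [(ℛ R c).convMul_apply]
    simp [← (ℛ R c).eq, j₁, j₂]
  have flip_eq : toConv (map (antipode R) (antipode R) ∘ₗ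
      (TensorProduct.comm R C C).toLinearMap ∘ₗ comul) =
      toConv (j₂.toLinearMap ∘ₗ antipode R) * toConv (j₁.toLinearMap ∘ₗ antipode R) := by
    ext c
    rw [(ℛ R c).convMul_apply]
    simp [← (ℛ R c).eq, j₁, j₂]
  apply toConv_injective
  refine (left_inv_eq_right_inv ?_ LinearMap.comul_right_inv).symm
  rw [flip_eq, comul_eq, mul_assoc, ← mul_assoc (toConv (j₁.toLinearMap ∘ₗ antipode R)),
    toConv_comp_antipode_mul_toConv, one_mul, toConv_comp_antipode_mul_toConv]

lemma comul_antipode (c : C) :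
    comul (antipode R c) = map (antipode R) (antipode R) (TensorProduct.comm R C C (comul c)) :=
  congr($comul_comp_antipode c)

lemma lTensor_comp_comul_comp_antipode (φ : C →ₗ[R] B) :
    toConv (φ.lTensor C ∘ₗ comul ∘ₗ antipode R) =
      toConv ((includeRight : B →ₐ[R] C ⊗[R] B).toLinearMap ∘ₗ φ ∘ₗ antipode R) *
        toConv ((includeLeft : C →ₐ[R] C ⊗[R] B).toLinearMap ∘ₗ antipode R) := by
  rw [comul_comp_antipode]
  ext c
  rw [(ℛ R c).convMul_apply]
  simp [← (ℛ R c).eq]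

end HopfAlgebra

section ConnesMoscovici

open Algebra.TensorProduct (includeLeft includeRight)

lemma map_mulRight_mulRight_eq_unop_mul {R Q A : Type*} [CommSemiring R] [Semiring Q] [Algebra R Q]
    [Semiring A] [Algebra R A] (φ : Q →ₗ[R] A) (y : Q) (c : A) (w : Q ⊗[R] Q) :
    map (LinearMap.mulRight R y) (LinearMap.mulRight R c ∘ₗ φ) w =
      LinearMap.lTensor Q (MulOpposite.opLinearEquiv R).symm.toLinearMap
        ((1 ⊗ₜ MulOpposite.op c) *
          LinearMap.lTensor Q ((MulOpposite.opLinearEquiv R).toLinearMap ∘ₗ φ) w *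
          (y ⊗ₜ 1)) := by
  induction w using TensorProduct.induction_on with
  | zero => simp
  | tmul u v => simp
  | add w w' hw hw' => simp [hw, hw', mul_add, add_mul]

variable {Q A : Type*} [Ring Q] [HopfAlgebra ℂ Q] [Ring A] [Algebra ℂ A]
  (act : Q →ₗ[ℂ] A →ₗ[ℂ] A)

lemma flip_one_eq_algebraMap_comp_counit
    (hact_alg_one : ∀ q : Q, act q 1 = counit (R := ℂ) q • (1 : A)) :
    act.flip 1 = Algebra.linearMap ℂ A ∘ₗ counit := by
  ext q
  simp [hact_alg_one, Algebra.smul_def]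

lemma cmAntipodeRHS_one_right (hact_alg_one : ∀ q : Q, act q 1 = counit (R := ℂ) q • (1 : A))
    (a : A) (x : Q) :
    cmAntipodeRHS act a x 1 =
      1 ⊗ₜ map (antipode ℂ) (act.flip a ∘ₗ antipode ℂ) (TensorProduct.comm ℂ Q Q (comul x)) := by
  have flip_one : act.flip 1 ∘ₗ antipode ℂ = Algebra.linearMap ℂ A ∘ₗ counit := by
    rw [flip_one_eq_algebraMap_comp_counit act hact_alg_one, LinearMap.comp_assoc,
      counit_comp_antipode]
  rw [cmAntipodeRHS, comul2, LinearMap.comp_apply, ← (ℛ ℂ x).eq]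
  simp [map_sum, tmul_sum, cmRev, flip_one, map_comp_counit_comul_right]

lemma cmMulRHS_one_one (hact_alg_one : ∀ q : Q, act q 1 = counit (R := ℂ) q • (1 : A))
    (p : Q) (c : A) (y : Q) (b : A) :
    cmMulRHS act 1 p c 1 y b =
      1 ⊗ₜ map (LinearMap.mulRight ℂ y) (LinearMap.mulRight ℂ c ∘ₗ act.flip b) (comul p) := by
  rw [cmMulRHS, comul2, flip_one_eq_algebraMap_comp_counit act hact_alg_one, LinearMap.comp_apply,
    ← LinearMap.comp_apply (map _ _), LinearMap.map_comp_lTensor, ← LinearMap.comp_assoc,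
    map_comp_counit_comul_left]
  simp

def antipodeActOp (c : A) : Q →ₗ[ℂ] Aᵐᵒᵖ :=
  (MulOpposite.opLinearEquiv ℂ).toLinearMap ∘ₗ act.flip c ∘ₗ antipode ℂ

lemma antipodeActOp_convMul (hact_alg_mul : ∀ (q : Q) (a a' : A),
      act q (a * a') = LinearMap.mul' ℂ A (map (act.flip a) (act.flip a') (comul (R := ℂ) q)))
    (a b : A) :
    toConv (antipodeActOp act a) * toConv (antipodeActOp act b) =
      toConv (antipodeActOp act (b * a)) := by
  ext q
  rw [(ℛ ℂ q).convMul_apply]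
  simp [antipodeActOp, hact_alg_mul, comul_antipode, ← (ℛ ℂ q).eq]

lemma cm_mul_antipode_tmul_eq_convMul
    (hact_alg_one : ∀ q : Q, act q 1 = counit (R := ℂ) q • (1 : A))
    {m : (A ⊗[ℂ] (Q ⊗[ℂ] A)) →ₗ[ℂ] (A ⊗[ℂ] (Q ⊗[ℂ] A)) →ₗ[ℂ] (A ⊗[ℂ] (Q ⊗[ℂ] A))}
    (hm : ∀ (a : A) (q : Q) (b a' : A) (q' : Q) (b' : A),
      m (a ⊗ₜ[ℂ] (q ⊗ₜ[ℂ] b)) (a' ⊗ₜ[ℂ] (q' ⊗ₜ[ℂ] b')) = cmMulRHS act a q b a' q' b')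
    {S : (A ⊗[ℂ] (Q ⊗[ℂ] A)) →ₗ[ℂ] (A ⊗[ℂ] (Q ⊗[ℂ] A))}
    (hS : ∀ (a : A) (q : Q) (b : A), S (a ⊗ₜ[ℂ] (q ⊗ₜ[ℂ] b)) = cmAntipodeRHS act a q b)
    (a b : A) (x y : Q) :
    m (S (a ⊗ₜ (x ⊗ₜ 1))) (1 ⊗ₜ (y ⊗ₜ b)) =
      1 ⊗ₜ LinearMap.lTensor Q (MulOpposite.opLinearEquiv ℂ).symm.toLinearMap
        ((toConv ((includeRight : Aᵐᵒᵖ →ₐ[ℂ] Q ⊗[ℂ] Aᵐᵒᵖ).toLinearMap ∘ₗ antipodeActOp act a) *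
          toConv (LinearMap.lTensor Q ((MulOpposite.opLinearEquiv ℂ).toLinearMap ∘ₗ act.flip b) ∘ₗ
            comul ∘ₗ antipode ℂ)) x * (y ⊗ₜ 1)) := by
  rw [hS, cmAntipodeRHS_one_right act hact_alg_one, (ℛ ℂ x).convMul_apply, ← (ℛ ℂ x).eq]
  simp [map_sum, tmul_sum, Finset.sum_mul, hm, cmMulRHS_one_one act hact_alg_one,
    map_mulRight_mulRight_eq_unop_mul, antipodeActOp]

lemma includeRight_antipodeActOp_convMul_convMul_includeLeft
    (hact_alg_mul : ∀ (q : Q) (a a' : A),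
      act q (a * a') = LinearMap.mul' ℂ A (map (act.flip a) (act.flip a') (comul (R := ℂ) q)))
    (a b : A) :
    toConv ((includeRight : Aᵐᵒᵖ →ₐ[ℂ] Q ⊗[ℂ] Aᵐᵒᵖ).toLinearMap ∘ₗ antipodeActOp act a) *
        toConv (LinearMap.lTensor Q ((MulOpposite.opLinearEquiv ℂ).toLinearMap ∘ₗ act.flip b) ∘ₗ
          comul ∘ₗ antipode ℂ) *
        toConv (includeLeft : Q →ₐ[ℂ] Q ⊗[ℂ] Aᵐᵒᵖ).toLinearMap =
      toConv ((includeRight : Aᵐᵒᵖ →ₐ[ℂ] Q ⊗[ℂ] Aᵐᵒᵖ).toLinearMap ∘ₗ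
        antipodeActOp act (b * a)) := by
  rw [lTensor_comp_comul_comp_antipode, mul_assoc, mul_assoc, toConv_comp_antipode_mul_toConv,
    mul_one, ← ofConv_toConv (antipodeActOp act (b * a)),
    ← antipodeActOp_convMul act hact_alg_mul, LinearMap.algHom_comp_convMul_distrib]
  rfl

end ConnesMoscovici

theorem cm_antipode_axiom_left
    {Q A : Type*} [Ring Q] [HopfAlgebra ℂ Q] [Ring A] [Algebra ℂ A]
    (act : Q →ₗ[ℂ] A →ₗ[ℂ] A)
    (hact_alg_mul : ∀ (q : Q) (a a' : A),
      act q (a * a') =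
        LinearMap.mul' ℂ A
          (TensorProduct.map (act.flip a) (act.flip a') (Coalgebra.comul (R := ℂ) q)))
    (hact_alg_one : ∀ q : Q, act q 1 = Coalgebra.counit (R := ℂ) q • (1 : A))
    -- the Connes–Moscovici multiplication on `H`:
    (m : (A ⊗[ℂ] (Q ⊗[ℂ] A)) →ₗ[ℂ] (A ⊗[ℂ] (Q ⊗[ℂ] A)) →ₗ[ℂ] (A ⊗[ℂ] (Q ⊗[ℂ] A)))
    (hm : ∀ (a : A) (q : Q) (b a' : A) (q' : Q) (b' : A),
      m (a ⊗ₜ[ℂ] (q ⊗ₜ[ℂ] b)) (a' ⊗ₜ[ℂ] (q' ⊗ₜ[ℂ] b')) = cmMulRHS act a q b a' q' b')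
    -- the antipode of `H`:
    (S : (A ⊗[ℂ] (Q ⊗[ℂ] A)) →ₗ[ℂ] (A ⊗[ℂ] (Q ⊗[ℂ] A)))
    (hS : ∀ (a : A) (q : Q) (b : A),
      S (a ⊗ₜ[ℂ] (q ⊗ₜ[ℂ] b)) = cmAntipodeRHS act a q b) :
    ∀ (a : A) (q : Q) (b : A),
      TensorProduct.lift ((m.comp (S.comp (cmLegL a))).compl₂ (cmLegR b))
          (Coalgebra.comul (R := ℂ) q) =
        (1 : A) ⊗ₜ[ℂ] ((1 : Q) ⊗ₜ[ℂ] act (HopfAlgebra.antipode (R := ℂ) q) (b * a)) := by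
  intro a q b
  rw [lift_comul_eq_convMul
      (TensorProduct.mk ℂ A (Q ⊗[ℂ] A) 1 ∘ₗ
        LinearMap.lTensor Q (MulOpposite.opLinearEquiv ℂ).symm.toLinearMap)
      _ (Algebra.TensorProduct.includeLeft : Q →ₐ[ℂ] Q ⊗[ℂ] Aᵐᵒᵖ).toLinearMap
      (cm_mul_antipode_tmul_eq_convMul act hact_alg_one hm hS a b),
    toConv_ofConv, includeRight_antipodeActOp_convMul_convMul_includeLeft act hact_alg_mul]
  simp [antipodeActOp]

end
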